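/- arXiv:2603.14387 — 2 statements merged into one kernel-verified Lean document; each statement's English description precedes it below -/
import Mathlib

section
/- Under the setting of the previous lemma, the mean gap satisfies μ₂ - μ₁ = (1-q)·E[1/(T₁+T₂+1)], where T₁+T₂ ~ Bin(N₁+N₂-2, q); consequently μ₂ - μ₁ = (1-q)·(1-(1-q)^{N-1})/((N-1)q) with N = N₁+N₂. -/
open MeasureTheory ProbabilityTheory

lemma conv_sum (n₁ n₂ k : ℕ) (q : ℝ) :
    ∑ i ∈ Finset.range (k+1),
      ((n₁.choose i : ℝ) * q ^ i * (1-q) ^ (n₁ - i))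
        * ((n₂.choose (k-i) : ℝ) * q ^ (k-i) * (1-q) ^ (n₂ - (k-i)))
    = ((n₁+n₂).choose k : ℝ) * q ^ k * (1-q) ^ (n₁+n₂-k) := by
  rw [Nat.add_choose_eq, Nat.cast_sum, Finset.Nat.sum_antidiagonal_eq_sum_range_succ_mk,
    Finset.sum_mul, Finset.sum_mul]
  refine Finset.sum_congr rfl fun i hi => ?_
  simp only [Finset.mem_range] at hi
  by_cases h1 : i ≤ n₁
  · by_cases h2 : k - i ≤ n₂
    · have hik : i ≤ k := Nat.lt_succ_iff.mp hi
      have e1 : q ^ k = q ^ i * q ^ (k - i) := by rw [← pow_add]; congr 1; omega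
      have e2 : (1-q) ^ (n₁+n₂-k) = (1-q)^(n₁-i) * (1-q)^(n₂-(k-i)) := by
        rw [← pow_add]; congr 1; omega
      rw [e1, e2]; push_cast; ring
    · rw [Nat.choose_eq_zero_of_lt (show n₂ < k - i by omega)]; push_cast; ring
  · rw [Nat.choose_eq_zero_of_lt (show n₁ < i by omega)]; push_cast; ring

lemma key_term (n k : ℕ) (q : ℝ) :
    (((n.choose k : ℝ) * q ^ k * (1-q) ^ (n-k)) * (1/((k:ℝ)+1))) * (((n:ℝ)+1) * q)
      = ((n+1).choose (k+1) : ℝ) * q ^ (k+1) * (1-q) ^ ((n+1) - (k+1)) := by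
  have h' : ((n:ℝ)+1) * (n.choose k : ℝ) = ((n+1).choose (k+1) : ℝ) * ((k:ℝ)+1) := by
    exact_mod_cast congrArg (Nat.cast : ℕ → ℝ) (Nat.add_one_mul_choose_eq n k)
  have hk : ((k:ℝ)+1) ≠ 0 := by positivity
  have e : (n+1) - (k+1) = n - k := by omega
  rw [e]
  field_simp
  linear_combination (q ^ (k+1) * (1 - q) ^ (n - k)) * h'

lemma sum_binom_inv (n : ℕ) {q : ℝ} (hq0 : 0 < q) :
    ∑ k ∈ Finset.range (n+1), ((n.choose k : ℝ) * q ^ k * (1-q) ^ (n-k)) * (1/((k:ℝ)+1))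
    = (1 - (1-q)^(n+1)) / (((n:ℝ)+1) * q) := by
  have hn1 : ((n:ℝ)+1) * q ≠ 0 := by positivity
  rw [eq_div_iff hn1, Finset.sum_mul]
  have hbin : ∑ j ∈ Finset.range (n+2), ((n+1).choose j : ℝ) * q^j * (1-q)^((n+1)-j) = 1 := by
    have h := add_pow q (1-q) (n+1)
    simp only [add_sub_cancel, one_pow] at h
    exact Eq.trans (Finset.sum_congr rfl fun j _ => by ring) h.symm
  have hsplit := Finset.sum_range_succ' (fun j => ((n+1).choose j : ℝ) * q^j * (1-q)^((n+1)-j)) (n+1)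
  simp only [Nat.choose_zero_right, Nat.cast_one, pow_zero, Nat.sub_zero, one_mul, mul_one] at hsplit
  calc ∑ k ∈ Finset.range (n+1), ((n.choose k : ℝ) * q ^ k * (1-q) ^ (n-k)) * (1/((k:ℝ)+1)) * (((n:ℝ)+1) * q)
      = ∑ k ∈ Finset.range (n+1), ((n+1).choose (k+1) : ℝ) * q ^ (k+1) * (1-q) ^ ((n+1) - (k+1)) :=
        Finset.sum_congr rfl fun k _ => key_term n k q
    _ = 1 - (1-q)^(n+1) := by rw [hbin] at hsplit; linarith

lemma integral_comp_nat {Ω : Type*} [MeasurableSpace Ω] (μ : Measure Ω)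
    (S : Ω → ℕ) (hS : Measurable S) (g : ℕ → ℝ) (hg : Integrable (fun ω => g (S ω)) μ) :
    ∫ ω, g (S ω) ∂μ = ∑' k, (μ {ω | S ω = k}).toReal * g k := by
  rw [← integral_map hS.aemeasurable (measurable_of_countable g).aestronglyMeasurable,
    MeasureTheory.integral_countable'
      ((integrable_map_measure (measurable_of_countable g).aestronglyMeasurable hS.aemeasurable).mpr hg)]
  refine tsum_congr fun k => ?_
  rw [measureReal_def, Measure.map_apply hS (measurableSet_singleton k)]
  simp only [smul_eq_mul]
  congr 1

/-- Under the setting of Statement 4, the mean gap satisfies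
`μ₂ - μ₁ = (1-q)·E[1/(T₁+T₂+1)]`, where `T₁+T₂ ~ Bin(N₁+N₂-2, q)`; consequently
`μ₂ - μ₁ = (1-q)·(1-(1-q)^(N-1))/((N-1)q)` with `N = N₁+N₂`. -/
theorem mean_gap_closed_form
    {Ω : Type*} [MeasurableSpace Ω] (μ : Measure Ω) [IsProbabilityMeasure μ]
    (N₁ N₂ : ℕ) (hN₁ : 1 ≤ N₁) (hN₂ : 1 ≤ N₂)
    (q : ℝ) (hq0 : 0 < q) (hq1 : q < 1)
    (T₁ T₂ ξ : Ω → ℕ)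
    (hT₁meas : Measurable T₁) (hT₂meas : Measurable T₂) (hξmeas : Measurable ξ)
    (hT₁ : ∀ k : ℕ, μ {ω | T₁ ω = k}
      = ENNReal.ofReal (((N₁ - 1).choose k : ℝ) * q ^ k * (1 - q) ^ (N₁ - 1 - k)))
    (hT₂ : ∀ k : ℕ, μ {ω | T₂ ω = k}
      = ENNReal.ofReal (((N₂ - 1).choose k : ℝ) * q ^ k * (1 - q) ^ (N₂ - 1 - k)))
    (hξ01 : ∀ ω, ξ ω ≤ 1)
    (hber : μ {ω | ξ ω = 1} = ENNReal.ofReal q)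
    (hindep : iIndepFun ![T₁, T₂, ξ] μ) :
    -- T₁ + T₂ ~ Bin(N₁+N₂-2, q)
    (∀ k : ℕ, μ {ω | T₁ ω + T₂ ω = k}
      = ENNReal.ofReal (((N₁ + N₂ - 2).choose k : ℝ) * q ^ k
          * (1 - q) ^ (N₁ + N₂ - 2 - k))) ∧
    -- the mean gap equals (1-q)·E[1/(T₁+T₂+1)]
    (∫ ω, ((T₂ ω : ℝ) + 1) / ((T₁ ω : ℝ) + (T₂ ω : ℝ) + (ξ ω : ℝ) + 1) ∂μ)
      - (∫ ω, ((T₂ ω : ℝ) + (ξ ω : ℝ)) / ((T₁ ω : ℝ) + (T₂ ω : ℝ) + (ξ ω : ℝ) + 1) ∂μ)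
      = (1 - q) * ∫ ω, (1 : ℝ) / ((T₁ ω : ℝ) + (T₂ ω : ℝ) + 1) ∂μ ∧
    -- closed form with N = N₁ + N₂
    (∫ ω, ((T₂ ω : ℝ) + 1) / ((T₁ ω : ℝ) + (T₂ ω : ℝ) + (ξ ω : ℝ) + 1) ∂μ)
      - (∫ ω, ((T₂ ω : ℝ) + (ξ ω : ℝ)) / ((T₁ ω : ℝ) + (T₂ ω : ℝ) + (ξ ω : ℝ) + 1) ∂μ)
      = (1 - q) * (1 - (1 - q) ^ (N₁ + N₂ - 1)) / (((N₁ + N₂ : ℝ) - 1) * q) := by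
  have hq' : (0:ℝ) ≤ 1 - q := by linarith
  have hmeasvec : ∀ i, Measurable (![T₁, T₂, ξ] i) := by
    intro i; fin_cases i <;> simpa
  have hpair : IndepFun T₁ T₂ μ := hindep.indepFun (show (0:Fin 3) ≠ 1 by decide)
  -- Part 1 : convolution
  have part1 : ∀ k : ℕ, μ {ω | T₁ ω + T₂ ω = k}
      = ENNReal.ofReal (((N₁ + N₂ - 2).choose k : ℝ) * q ^ k
          * (1 - q) ^ (N₁ + N₂ - 2 - k)) := by
    intro k
    have hset : {ω | T₁ ω + T₂ ω = k}
        = ⋃ i ∈ Finset.range (k+1), ({ω | T₁ ω = i} ∩ {ω | T₂ ω = k - i}) := by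
      ext ω
      simp only [Set.mem_setOf_eq, Set.mem_iUnion, Set.mem_inter_iff, Finset.mem_range]
      constructor
      · intro h; exact ⟨T₁ ω, by omega, rfl, by omega⟩
      · rintro ⟨i, hi, h1, h2⟩; omega
    have hdisj : Set.PairwiseDisjoint (↑(Finset.range (k+1)))
        (fun i => {ω | T₁ ω = i} ∩ {ω | T₂ ω = k - i}) := by
      intro i _ j _ hij
      refine Set.disjoint_left.mpr fun ω hωi hωj => ?_
      exact hij (hωi.1.symm.trans hωj.1)
    have hmeas : ∀ i ∈ Finset.range (k+1),
        MeasurableSet ({ω | T₁ ω = i} ∩ {ω | T₂ ω = k - i}) := fun i _ =>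
      (hT₁meas (measurableSet_singleton i)).inter (hT₂meas (measurableSet_singleton (k - i)))
    rw [hset, measure_biUnion_finset hdisj hmeas]
    have hterm : ∀ i, μ ({ω | T₁ ω = i} ∩ {ω | T₂ ω = k - i})
        = ENNReal.ofReal ((((N₁-1).choose i : ℝ) * q ^ i * (1-q) ^ (N₁-1 - i))
            * (((N₂-1).choose (k-i) : ℝ) * q ^ (k-i) * (1-q) ^ (N₂-1 - (k-i)))) := by
      intro i
      have := hpair.measure_inter_preimage_eq_mul {i} {k - i}
        (measurableSet_singleton i) (measurableSet_singleton (k-i))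
      rw [show T₁ ⁻¹' {i} = {ω | T₁ ω = i} from rfl,
        show T₂ ⁻¹' {k-i} = {ω | T₂ ω = k - i} from rfl] at this
      rw [this, hT₁ i, hT₂ (k-i), ← ENNReal.ofReal_mul (by positivity)]
    simp only [hterm]
    rw [← ENNReal.ofReal_sum_of_nonneg (fun i _ => by positivity)]
    congr 1
    rw [conv_sum (N₁-1) (N₂-1) k q, show N₁ - 1 + (N₂ - 1) = N₁ + N₂ - 2 by omega]
  refine ⟨part1, ?_⟩
  -- boundedness / integrability machinery
  have hX : Measurable (fun ω => (T₁ ω, T₂ ω, ξ ω)) := hT₁meas.prodMk (hT₂meas.prodMk hξmeas)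
  have hint : ∀ (F : ℕ × ℕ × ℕ → ℝ), (∀ p, ‖F p‖ ≤ 1) →
      Integrable (fun ω => F (T₁ ω, T₂ ω, ξ ω)) μ := by
    intro F hF
    refine ⟨((measurable_of_countable F).comp hX).aestronglyMeasurable, ?_⟩
    exact HasFiniteIntegral.of_bounded (C := 1) (ae_of_all _ fun ω => hF _)
  have hA : Integrable (fun ω => ((T₂ ω : ℝ) + 1) / ((T₁ ω : ℝ) + (T₂ ω : ℝ) + (ξ ω : ℝ) + 1)) μ := by
    refine hint (fun p => ((p.2.1:ℝ)+1)/((p.1:ℝ)+(p.2.1:ℝ)+(p.2.2:ℝ)+1)) fun p => ?_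
    rw [Real.norm_eq_abs, abs_of_nonneg (by positivity), div_le_one (by positivity)]
    have h1 : (0:ℝ) ≤ (p.1:ℝ) := Nat.cast_nonneg _
    have h3 : (0:ℝ) ≤ (p.2.2:ℝ) := Nat.cast_nonneg _
    linarith
  have hB : Integrable (fun ω => ((T₂ ω : ℝ) + (ξ ω : ℝ)) / ((T₁ ω : ℝ) + (T₂ ω : ℝ) + (ξ ω : ℝ) + 1)) μ := by
    refine hint (fun p => ((p.2.1:ℝ)+(p.2.2:ℝ))/((p.1:ℝ)+(p.2.1:ℝ)+(p.2.2:ℝ)+1)) fun p => ?_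
    rw [Real.norm_eq_abs, abs_of_nonneg (by positivity), div_le_one (by positivity)]
    have h1 : (0:ℝ) ≤ (p.1:ℝ) := Nat.cast_nonneg _
    linarith
  have hG : Integrable (fun ω => (1:ℝ) / ((T₁ ω : ℝ) + (T₂ ω : ℝ) + 1)) μ := by
    refine hint (fun p => (1:ℝ)/((p.1:ℝ)+(p.2.1:ℝ)+1)) fun p => ?_
    rw [Real.norm_eq_abs, abs_of_nonneg (by positivity), div_le_one (by positivity)]
    have h1 : (0:ℝ) ≤ (p.1:ℝ) := Nat.cast_nonneg _
    have h2 : (0:ℝ) ≤ (p.2.1:ℝ) := Nat.cast_nonneg _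
    linarith
  have hY : Integrable (fun ω => if ξ ω = 0 then (1:ℝ) else 0) μ := by
    refine hint (fun p => if p.2.2 = 0 then (1:ℝ) else 0) fun p => ?_
    by_cases h : p.2.2 = 0 <;> simp [h]
  -- pointwise identity
  have hpt : ∀ ω, ((T₂ ω : ℝ) + 1) / ((T₁ ω : ℝ) + (T₂ ω : ℝ) + (ξ ω : ℝ) + 1)
      - ((T₂ ω : ℝ) + (ξ ω : ℝ)) / ((T₁ ω : ℝ) + (T₂ ω : ℝ) + (ξ ω : ℝ) + 1)
      = (if ξ ω = 0 then (1:ℝ) else 0) * ((1:ℝ) / ((T₁ ω : ℝ) + (T₂ ω : ℝ) + 1)) := by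
    intro ω
    have h1 : (0:ℝ) ≤ (T₁ ω:ℝ) := Nat.cast_nonneg _
    have h2 : (0:ℝ) ≤ (T₂ ω:ℝ) := Nat.cast_nonneg _
    rcases Nat.le_one_iff_eq_zero_or_eq_one.mp (hξ01 ω) with h | h <;> rw [h]
    · have hd : (T₁ ω:ℝ) + (T₂ ω:ℝ) + 1 ≠ 0 := by positivity
      simp only [Nat.cast_zero, add_zero, if_pos rfl, if_true, one_mul, div_sub_div_same]
      field_simp
      ring
    · simp only [Nat.cast_one, if_neg one_ne_zero, zero_mul, div_sub_div_same]
      rw [show ((T₂ ω:ℝ) + 1 - ((T₂ ω:ℝ) + 1)) = 0 by ring, zero_div]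
  -- independence of S=(T₁+T₂) from ξ, transported to the composed functions
  have hindSξ : IndepFun (fun ω => (T₁ ω, T₂ ω)) ξ μ :=
    hindep.indepFun_prodMk hmeasvec 0 1 2 (by decide) (by decide)
  have hindYG : IndepFun (fun ω => if ξ ω = 0 then (1:ℝ) else 0)
      (fun ω => (1:ℝ) / ((T₁ ω : ℝ) + (T₂ ω : ℝ) + 1)) μ := by
    have := (hindSξ.comp (measurable_of_countable (fun p : ℕ×ℕ => (1:ℝ)/((p.1:ℝ)+(p.2:ℝ)+1)))
      (measurable_of_countable (fun e : ℕ => if e = 0 then (1:ℝ) else 0))).symm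
    exact this
  -- μ {ξ = 0} = 1 - q
  have hξ0 : μ {ω | ξ ω = 0} = ENNReal.ofReal (1 - q) := by
    have hc : {ω | ξ ω = 0} = {ω | ξ ω = 1}ᶜ := by
      ext ω; simp only [Set.mem_setOf_eq, Set.mem_compl_iff]
      have := hξ01 ω; omega
    rw [hc, measure_compl (show MeasurableSet {ω | ξ ω = 1} from hξmeas (measurableSet_singleton 1)) (measure_ne_top _ _), hber,
      measure_univ, ENNReal.ofReal_sub 1 hq0.le, ENNReal.ofReal_one]
  have hYval : ∫ ω, (if ξ ω = 0 then (1:ℝ) else 0) ∂μ = 1 - q := by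
    have he : (fun ω => if ξ ω = 0 then (1:ℝ) else 0)
        = Set.indicator {ω | ξ ω = 0} (fun _ => (1:ℝ)) := by
      funext ω; by_cases h : ξ ω = 0 <;> simp [Set.indicator_apply, h]
    rw [he, integral_indicator_const (1:ℝ) (show MeasurableSet {ω | ξ ω = 0} from hξmeas (measurableSet_singleton 0)), measureReal_def, hξ0,
      ENNReal.toReal_ofReal hq', smul_eq_mul, mul_one]
  -- Part 2
  have part2 : (∫ ω, ((T₂ ω : ℝ) + 1) / ((T₁ ω : ℝ) + (T₂ ω : ℝ) + (ξ ω : ℝ) + 1) ∂μ)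
      - (∫ ω, ((T₂ ω : ℝ) + (ξ ω : ℝ)) / ((T₁ ω : ℝ) + (T₂ ω : ℝ) + (ξ ω : ℝ) + 1) ∂μ)
      = (1 - q) * ∫ ω, (1 : ℝ) / ((T₁ ω : ℝ) + (T₂ ω : ℝ) + 1) ∂μ := by
    rw [← integral_sub hA hB]
    have : (fun ω => ((T₂ ω : ℝ) + 1) / ((T₁ ω : ℝ) + (T₂ ω : ℝ) + (ξ ω : ℝ) + 1)
        - ((T₂ ω : ℝ) + (ξ ω : ℝ)) / ((T₁ ω : ℝ) + (T₂ ω : ℝ) + (ξ ω : ℝ) + 1))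
        = (fun ω => if ξ ω = 0 then (1:ℝ) else 0) * (fun ω => (1:ℝ) / ((T₁ ω : ℝ) + (T₂ ω : ℝ) + 1)) := by
      funext ω; exact hpt ω
    rw [this, hindYG.integral_mul_eq_mul_integral hY.aestronglyMeasurable hG.aestronglyMeasurable, hYval]
  refine ⟨part2, ?_⟩
  rw [part2]
  -- compute ∫ 1/(S+1)
  have hSmeas : Measurable (fun ω => T₁ ω + T₂ ω) :=
    (measurable_of_countable (fun p : ℕ×ℕ => p.1 + p.2)).comp (hT₁meas.prodMk hT₂meas)
  set n := N₁ + N₂ - 2 with hn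
  have hG' : Integrable (fun ω => (1:ℝ)/(((T₁ ω + T₂ ω : ℕ):ℝ)+1)) μ :=
    hG.congr (ae_of_all _ fun ω => by push_cast; ring)
  have h1 : ∫ ω, (1:ℝ)/(((T₁ ω + T₂ ω : ℕ):ℝ)+1) ∂μ
      = ∑' k, (μ {ω | T₁ ω + T₂ ω = k}).toReal * ((1:ℝ)/((k:ℝ)+1)) :=
    integral_comp_nat μ (fun ω => T₁ ω + T₂ ω) hSmeas (fun k => (1:ℝ)/((k:ℝ)+1)) hG'
  have hGval : ∫ ω, (1 : ℝ) / ((T₁ ω : ℝ) + (T₂ ω : ℝ) + 1) ∂μ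
      = (1 - (1-q)^(n+1)) / (((n:ℝ)+1) * q) := by
    rw [show ∫ ω, (1 : ℝ) / ((T₁ ω : ℝ) + (T₂ ω : ℝ) + 1) ∂μ
        = ∫ ω, (1:ℝ)/(((T₁ ω + T₂ ω : ℕ):ℝ)+1) ∂μ from
      integral_congr_ae (ae_of_all _ fun ω => by push_cast; ring), h1]
    have hts : ∑' k, (μ {ω | T₁ ω + T₂ ω = k}).toReal * ((1:ℝ)/((k:ℝ)+1))
        = ∑ k ∈ Finset.range (n+1), (μ {ω | T₁ ω + T₂ ω = k}).toReal * ((1:ℝ)/((k:ℝ)+1)) := by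
      refine tsum_eq_sum fun k hk => ?_
      simp only [Finset.mem_range, not_lt] at hk
      rw [part1 k, Nat.choose_eq_zero_of_lt (by omega)]
      simp
    rw [hts, ← sum_binom_inv n hq0]
    refine Finset.sum_congr rfl fun k _ => ?_
    rw [part1 k, ENNReal.toReal_ofReal (by positivity)]
  rw [hGval, show n + 1 = N₁ + N₂ - 1 by omega,
    show ((n:ℝ)+1) = (N₁ + N₂ : ℝ) - 1 by rw [hn]; push_cast [show 2 ≤ N₁ + N₂ by omega]; ring,
    mul_div_assoc]
end

section
/- In the setting of the paper, the variance of the per-observation mean label noise level satisfies σ_i² = O(1/(MN)) for i = 1, 2: if each l_i-distributed variable is of the form (T₂ + c)/(T₁ + T₂ + ξ + 1) with T₁ ~ Bin(N₁-1,q), T₂ ~ Bin(N₂-1,q), ξ ~ Bernoulli(q) independent, then Var(l_i) = O(1/N), and averaging Bin(M,q)-many i.i.d. copies gives variance O(1/(MN)). -/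
open MeasureTheory ProbabilityTheory


set_option maxHeartbeats 1000000
open MeasureTheory ProbabilityTheory Finset
namespace VNLO


noncomputable def w (q : ℝ) (n k : ℕ) : ℝ := (n.choose k : ℝ) * q^k * (1-q)^(n-k)

lemma w_nonneg {q : ℝ} (hq0 : 0 ≤ q) (hq1 : q ≤ 1) (n k : ℕ) : 0 ≤ w q n k := by
  have h : (0:ℝ) ≤ 1 - q := by linarith
  exact mul_nonneg (mul_nonneg (Nat.cast_nonneg _) (pow_nonneg hq0 _)) (pow_nonneg h _)

lemma w_eval {q : ℝ} (n k : ℕ) :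
    Polynomial.eval q (bernsteinPolynomial ℝ n k) = w q n k := by
  simp [bernsteinPolynomial, w]

lemma sum_w (q : ℝ) (n : ℕ) : ∑ k ∈ range (n+1), w q n k = 1 := by
  have h := congrArg (Polynomial.eval q) (bernsteinPolynomial.sum ℝ n)
  simpa [Polynomial.eval_finset_sum, w_eval] using h

lemma sum_w_mul (q : ℝ) (n : ℕ) :
    ∑ k ∈ range (n+1), w q n k * k = n * q := by
  have h := congrArg (Polynomial.eval q) (bernsteinPolynomial.sum_smul ℝ n)
  simp only [Polynomial.eval_finset_sum, nsmul_eq_mul, Polynomial.eval_mul,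
    Polynomial.eval_natCast, Polynomial.eval_X, w_eval] at h
  rw [← h]; apply Finset.sum_congr rfl; intro k _; ring

lemma cast_mul_pred (m : ℕ) : (m:ℝ) * ((m-1:ℕ):ℝ) = (m:ℝ)^2 - m := by
  cases m with
  | zero => simp
  | succ m => push_cast [Nat.succ_sub_one]; ring

lemma sum_w_mul_mul (q : ℝ) (n : ℕ) :
    ∑ k ∈ range (n+1), w q n k * ((k:ℝ)^2 - k) = ((n:ℝ)^2 - n) * q^2 := by
  have h := congrArg (Polynomial.eval q) (bernsteinPolynomial.sum_mul_smul ℝ n)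
  simp only [Polynomial.eval_finset_sum, nsmul_eq_mul, Polynomial.eval_mul,
    Polynomial.eval_natCast, Polynomial.eval_pow, Polynomial.eval_X, Nat.cast_mul, w_eval] at h
  rw [show ((n:ℝ)^2 - n) * q^2 = (n:ℝ) * ((n-1:ℕ):ℝ) * q^2 by rw [cast_mul_pred]]
  rw [← h]; apply Finset.sum_congr rfl; intro k _
  rw [show (k:ℝ) * ((k-1:ℕ):ℝ) * w q n k = ((k:ℝ)^2 - k) * w q n k by rw [cast_mul_pred]]
  ring

lemma sum_var {q : ℝ} (hq0 : 0 ≤ q) (hq1 : q ≤ 1) (n : ℕ) :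
    ∑ k ∈ range (n+1), w q n k * ((k:ℝ) - n*q)^2 ≤ n := by
  have h1 := sum_w q n
  have h2 := sum_w_mul q n
  have h3 := sum_w_mul_mul q n
  have e : ∑ k ∈ range (n+1), w q n k * ((k:ℝ) - n*q)^2
      = (∑ k ∈ range (n+1), w q n k * ((k:ℝ)^2 - k))
        + (1 - 2*(n:ℝ)*q) * (∑ k ∈ range (n+1), w q n k * k)
        + ((n:ℝ)*q)^2 * (∑ k ∈ range (n+1), w q n k) := by
    rw [Finset.mul_sum, Finset.mul_sum, ← Finset.sum_add_distrib, ← Finset.sum_add_distrib]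
    apply Finset.sum_congr rfl; intro k _; ring
  rw [e, h1, h2, h3]
  have hn : (0:ℝ) ≤ n := Nat.cast_nonneg n
  nlinarith [mul_nonneg (mul_nonneg hn hq0) (sub_nonneg.2 hq1)]


lemma choose_cast_succ (n k : ℕ) :
    ((n+1:ℕ):ℝ) * (n.choose k : ℝ) = ((n+1).choose (k+1) : ℝ) * (k+1) := by
  exact_mod_cast congrArg (Nat.cast (R := ℝ)) (Nat.add_one_mul_choose_eq n k)

lemma w_shift {q : ℝ} (hq : q ≠ 0) (n k : ℕ) :
    w q n k * (1/(k+1)) = w q (n+1) (k+1) * (1/(q*(n+1))) := by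
  have h := choose_cast_succ n k
  have hk : ((k:ℝ)+1) ≠ 0 := by positivity
  have hn : ((n:ℝ)+1) ≠ 0 := by positivity
  simp only [w]
  have hsub : n + 1 - (k + 1) = n - k := by omega
  rw [hsub, pow_succ]
  field_simp
  push_cast at h ⊢
  linear_combination ((1-q)^(n-k)) * h

lemma sum_shift_le {q : ℝ} (hq0 : 0 ≤ q) (hq1 : q ≤ 1) (n : ℕ) :
    ∑ k ∈ range (n+1), w q (n+1) (k+1) ≤ 1 := by
  have h := sum_w q (n+1)
  rw [Finset.sum_range_succ'] at h
  nlinarith [w_nonneg hq0 hq1 (n+1) 0, Finset.sum_nonneg (fun k (_ : k ∈ range (n+1)) => w_nonneg hq0 hq1 (n+1) (k+1))]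

lemma sum_inv {q : ℝ} (hq0 : 0 < q) (hq1 : q ≤ 1) (n : ℕ) :
    ∑ k ∈ range (n+1), w q n k * (1/(k+1)) ≤ 1/(q*(n+1)) := by
  have e : ∀ k ∈ range (n+1), w q n k * (1/(k+1)) = w q (n+1) (k+1) * (1/(q*(n+1))) :=
    fun k _ => w_shift hq0.ne' n k
  rw [Finset.sum_congr rfl e, ← Finset.sum_mul]
  have h1 : (0:ℝ) ≤ 1/(q*(n+1)) := by positivity
  nlinarith [sum_shift_le hq0.le hq1 n]

lemma sum_inv_sq {q : ℝ} (hq0 : 0 < q) (hq1 : q ≤ 1) (n : ℕ) :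
    ∑ k ∈ range (n+1), w q n k * (1/((k:ℝ)+1)^2) ≤ 2/(q^2*((n:ℝ)+1)^2) := by
  have step1 : ∀ k ∈ range (n+1), w q n k * (1/((k:ℝ)+1)^2)
      ≤ w q n k * (2 * ((1/(k+1)) * (1/(k+2)))) := by
    intro k _
    apply mul_le_mul_of_nonneg_left _ (w_nonneg hq0.le hq1 n k)
    have hk : (0:ℝ) ≤ k := Nat.cast_nonneg k
    rw [div_le_iff₀ (by positivity)]
    have e : 2 * (1 / ((k:ℝ) + 1) * (1 / ((k:ℝ) + 2))) = 2 / (((k:ℝ)+1) * ((k:ℝ)+2)) := by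
      field_simp
    rw [e, div_mul_eq_mul_div, le_div_iff₀ (by positivity)]
    nlinarith [hk]
  have step2 : ∀ k, w q n k * ((1/(k+1)) * (1/(k+2)))
      = w q (n+2) (k+2) * (1/(q^2*((n:ℝ)+1)*((n:ℝ)+2))) := by
    intro k
    have h1 := choose_cast_succ n k
    have h2 := choose_cast_succ (n+1) (k+1)
    push_cast at h1 h2
    simp only [w]
    have hsub : n + 2 - (k + 2) = n - k := by omega
    rw [hsub, pow_succ, pow_succ]
    have hk1 : ((k:ℝ)+1) ≠ 0 := by positivity
    have hk2 : ((k:ℝ)+2) ≠ 0 := by positivity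
    have hn1 : ((n:ℝ)+1) ≠ 0 := by positivity
    have hn2 : ((n:ℝ)+2) ≠ 0 := by positivity
    field_simp
    push_cast
    linear_combination ((1-q)^(n-k)) * (((n:ℝ)+2) * h1 + ((k:ℝ)+1) * h2)
  have sum2 : ∑ k ∈ range (n+1), w q (n+2) (k+2) ≤ 1 := by
    have h := sum_w q (n+2)
    rw [Finset.sum_range_succ', Finset.sum_range_succ'] at h
    have a0 := w_nonneg hq0.le hq1 (n+2) 0
    have a1 := w_nonneg hq0.le hq1 (n+2) 1
    nlinarith [Finset.sum_nonneg (fun k (_ : k ∈ range (n+1)) => w_nonneg hq0.le hq1 (n+2) (k+2))]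
  calc ∑ k ∈ range (n+1), w q n k * (1/((k:ℝ)+1)^2)
      ≤ ∑ k ∈ range (n+1), w q n k * (2 * ((1/(k+1)) * (1/(k+2)))) := Finset.sum_le_sum step1
    _ = 2 * (1/(q^2*((n:ℝ)+1)*((n:ℝ)+2))) * ∑ k ∈ range (n+1), w q (n+2) (k+2) := by
        rw [Finset.mul_sum]; apply Finset.sum_congr rfl; intro k _
        rw [show w q n k * (2 * (1/((k:ℝ)+1) * (1/((k:ℝ)+2)))) = 2 * (w q n k * (1/((k:ℝ)+1) * (1/((k:ℝ)+2)))) by ring, step2 k]; ring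
    _ ≤ 2 * (1/(q^2*((n:ℝ)+1)*((n:ℝ)+2))) * 1 := by
        apply mul_le_mul_of_nonneg_left sum2 (by positivity)
    _ ≤ 2/(q^2*((n:ℝ)+1)^2) := by
        rw [mul_one, mul_one_div]
        rw [div_le_div_iff₀ (by positivity) (by positivity)]
        nlinarith [Nat.cast_nonneg (α := ℝ) n, sq_nonneg q]

lemma w_zero (q : ℝ) {n k : ℕ} (h : n < k) : w q n k = 0 := by
  simp [w, Nat.choose_eq_zero_of_lt h]

variable {Ω : Type} [MeasurableSpace Ω] {μ : Measure Ω}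

/-- a.e., a binomial(n,q) variable is at most n. -/
lemma ae_le_of_dist {T : Ω → ℕ} {q : ℝ} {n : ℕ}
    (hd : ∀ k, μ {ω | T ω = k} = ENNReal.ofReal (w q n k)) :
    ∀ᵐ ω ∂μ, T ω ≤ n := by
  rw [ae_iff]
  have : {ω | ¬ T ω ≤ n} = ⋃ k : ℕ, {ω | T ω = n + 1 + k} := by
    ext ω; simp only [Set.mem_setOf_eq, Set.mem_iUnion, not_le]
    constructor
    · intro h; exact ⟨T ω - (n+1), by omega⟩
    · rintro ⟨k, hk⟩; omega
  rw [this]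
  refine measure_iUnion_null fun k => ?_
  rw [hd, w_zero q (by omega : n < n + 1 + k)]
  simp

/-- Expectation of `f ∘ T` for a binomial variable. -/
lemma integral_comp [IsFiniteMeasure μ] {T : Ω → ℕ} (hT : Measurable T) {q : ℝ} (hq0 : 0 ≤ q) (hq1 : q ≤ 1) {n : ℕ}
    (hd : ∀ k, μ {ω | T ω = k} = ENNReal.ofReal (w q n k)) (f : ℕ → ℝ) :
    ∫ ω, f (T ω) ∂μ = ∑ k ∈ range (n+1), w q n k * f k := by
  have hmeas : ∀ k : ℕ, MeasurableSet {ω | T ω = k} := fun k =>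
    hT (measurableSet_singleton k)
  have hae : (fun ω => f (T ω)) =ᵐ[μ]
      (fun ω => ∑ k ∈ range (n+1), Set.indicator {ω | T ω = k} (fun _ => f k) ω) := by
    filter_upwards [ae_le_of_dist hd] with ω hω
    have : ∀ k ∈ range (n+1), Set.indicator {ω' | T ω' = k} (fun _ => f k) ω
        = if T ω = k then f k else 0 := by
      intro k _; by_cases h : T ω = k <;> simp [Set.indicator, h]
    rw [Finset.sum_congr rfl this, Finset.sum_ite_eq (range (n+1)) (T ω) f,
      if_pos (Finset.mem_range.2 (by omega))]
  rw [integral_congr_ae hae, integral_finset_sum _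
    (fun k _ => (integrable_const (f k)).indicator (hmeas k))]
  refine Finset.sum_congr rfl fun k _ => ?_
  rw [integral_indicator_const _ (hmeas k), measureReal_def, hd k, ENNReal.toReal_ofReal (w_nonneg hq0 hq1 n k)]
  simp [mul_comm]

/-- product of compositions of independent ℕ-valued rvs -/
lemma indep_integral_mul {T₁ T₂ : Ω → ℕ} (hT₁ : Measurable T₁) (hT₂ : Measurable T₂)
    (h : IndepFun T₁ T₂ μ) (f g : ℕ → ℝ) :
    ∫ ω, f (T₁ ω) * g (T₂ ω) ∂μ = (∫ ω, f (T₁ ω) ∂μ) * ∫ ω, g (T₂ ω) ∂μ := by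
  have h2 : IndepFun (f ∘ T₁) (g ∘ T₂) μ := h.comp measurable_from_nat measurable_from_nat
  simpa using h2.integral_mul_eq_mul_integral
    ((measurable_from_nat.comp hT₁).aestronglyMeasurable)
    ((measurable_from_nat.comp hT₂).aestronglyMeasurable)


lemma sq3 (p r d : ℝ) : (p - r + d)^2 ≤ 3*(p^2+r^2+d^2) := by
  nlinarith [sq_nonneg (p+r), sq_nonneg (p-d), sq_nonneg (r+d)]

lemma frac_split (a b c d : ℝ) : (a*c)/(b*d) = (a/b) * (c * (1/d)) := by
  rw [mul_div_mul_comm, div_eq_mul_one_div c d]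

lemma pointwise_bound {q a b x y z u : ℝ} (hq0 : 0 < q) (hq1 : q ≤ 1)
    (ha : 0 ≤ a) (hb : 0 ≤ b)
    (hx : 0 ≤ x) (hy : 0 ≤ y) (hz0 : 0 ≤ z) (hz : z ≤ 1)
    (hu0 : 0 ≤ u) (hu : u ≤ 1) :
    ((y + u)/(x + y + z + 1) - (b+1)/(a+b+2))^2 ≤
      (3*(a+1)^2/(a+b+2)^2) * ((y - b*q)^2 * (1/(x+1)^2))
      + (3*(b+1)^2/(a+b+2)^2) * ((x - a*q)^2 * (1/(y+1)^2))
      + 48 * ((1/(x+1)) * (1/(y+1))) := by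
  obtain ⟨N, hN⟩ : ∃ N : ℝ, N = a+b+2 := ⟨_, rfl⟩
  obtain ⟨den, hden⟩ : ∃ d : ℝ, d = x+y+z+1 := ⟨_, rfl⟩
  obtain ⟨D, hD⟩ : ∃ D : ℝ, D = N*u - (b+1)*z - (b+1) + q*(b-a) := ⟨_, rfl⟩
  obtain ⟨A, hA⟩ : ∃ A : ℝ, A = (a+1)*(y - b*q) - (b+1)*(x - a*q) + D := ⟨_, rfl⟩
  obtain ⟨P₁, hP₁⟩ : ∃ P : ℝ, P = ((a+1)*(y - b*q))^2 := ⟨_, rfl⟩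
  obtain ⟨P₂, hP₂⟩ : ∃ P : ℝ, P = ((b+1)*(x - a*q))^2 := ⟨_, rfl⟩
  have hNpos : 0 < N := by rw [hN]; linarith
  have hdenpos : 0 < den := by rw [hden]; linarith
  rw [← hN, ← hden]
  have eq1 : (y + u)/den - (b+1)/N = A / (N * den) := by
    rw [hA, hD, hden, hN]; field_simp; ring
  have hD2 : D^2 ≤ 16*N^2 := by
    have h1 : D ≤ 4*N := by rw [hD, hN]; nlinarith
    have h2 : -(4*N) ≤ D := by rw [hD, hN]; nlinarith
    nlinarith
  have hA2 : A^2 ≤ 3*(P₁ + P₂ + D^2) := by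
    rw [hA, hP₁, hP₂]; exact sq3 _ _ _
  rw [eq1, div_pow, mul_pow]
  have hx1 : (0:ℝ) < x + 1 := by linarith
  have hy1 : (0:ℝ) < y + 1 := by linarith
  have hdx : (x+1)^2 ≤ den^2 := by rw [hden]; nlinarith
  have hdy : (y+1)^2 ≤ den^2 := by rw [hden]; nlinarith
  have hdxy : (x+1)*(y+1) ≤ den^2 := by rw [hden]; nlinarith
  have hP₁0 : 0 ≤ P₁ := by rw [hP₁]; positivity
  have hP₂0 : 0 ≤ P₂ := by rw [hP₂]; positivity
  have g1 : (3*P₁)/(N^2*den^2) ≤ (3*(a+1)^2/N^2) * ((y - b*q)^2 * (1/(x+1)^2)) := by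
    have e1 : (3*(a+1)^2/N^2) * ((y - b*q)^2 * (1/(x+1)^2))
        = (3*(a+1)^2 * (y - b*q)^2)/(N^2*(x+1)^2) := (frac_split _ _ _ _).symm
    have e1' : 3*(a+1)^2 * (y - b*q)^2 = 3*P₁ := by rw [hP₁]; ring
    rw [e1, e1']
    exact div_le_div_of_nonneg_left (by linarith) (by positivity) (by nlinarith)
  have g2 : (3*P₂)/(N^2*den^2) ≤ (3*(b+1)^2/N^2) * ((x - a*q)^2 * (1/(y+1)^2)) := by
    have e2 : (3*(b+1)^2/N^2) * ((x - a*q)^2 * (1/(y+1)^2))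
        = (3*(b+1)^2 * (x - a*q)^2)/(N^2*(y+1)^2) := (frac_split _ _ _ _).symm
    have e2' : 3*(b+1)^2 * (x - a*q)^2 = 3*P₂ := by rw [hP₂]; ring
    rw [e2, e2']
    exact div_le_div_of_nonneg_left (by linarith) (by positivity) (by nlinarith)
  have g3 : (3*D^2)/(N^2*den^2) ≤ 48 * ((1/(x+1)) * (1/(y+1))) := by
    have s1 : (3*D^2)/(N^2*den^2) ≤ (N^2*48)/(N^2*((x+1)*(y+1))) := by
      have b1 : (0:ℝ) ≤ N^2*48 := by positivity
      have b2 : 3*D^2 ≤ N^2*48 := by linarith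
      have b3 : (0:ℝ) < N^2*((x+1)*(y+1)) := by positivity
      have b4 : N^2*((x+1)*(y+1)) ≤ N^2*den^2 := by nlinarith [sq_nonneg N]
      exact div_le_div₀ b1 b2 b3 b4
    have s2 : (N^2*48)/(N^2*((x+1)*(y+1))) = 48/((x+1)*(y+1)) :=
      mul_div_mul_left (48:ℝ) ((x+1)*(y+1)) (by positivity)
    have s3 : 48 * ((1/(x+1)) * (1/(y+1))) = (48:ℝ)/((x+1)*(y+1)) := by
      rw [div_mul_div_comm, one_mul, mul_one_div]
    rw [s3, ← s2]; exact s1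
  have split : A^2 / (N^2 * den^2) ≤
      (3*P₁)/(N^2*den^2) + (3*P₂)/(N^2*den^2) + (3*D^2)/(N^2*den^2) := by
    have h0 : A^2 / (N^2 * den^2) ≤ (3*(P₁ + P₂ + D^2)) / (N^2 * den^2) := by gcongr
    have h1 : (3*(P₁ + P₂ + D^2)) / (N^2 * den^2)
        = (3*P₁)/(N^2*den^2) + (3*P₂)/(N^2*den^2) + (3*D^2)/(N^2*den^2) := by
      rw [← add_div, ← add_div]; ring_nf
    linarith
  linarith


lemma numeric {q a b : ℝ} (hq0 : 0 < q) (hq1 : q ≤ 1) (ha : 0 ≤ a) (hb : 0 ≤ b) :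
    (3*(a+1)^2/(a+b+2)^2) * (b * (2/(q^2*(a+1)^2)))
    + (3*(b+1)^2/(a+b+2)^2) * (a * (2/(q^2*(b+1)^2)))
    + 48 * ((1/(q*(a+1))) * (1/(q*(b+1))))
    ≤ (108/q^2)/(a+b+2) := by
  have hNpos : (0:ℝ) < a+b+2 := by linarith
  have ha1 : (0:ℝ) < a+1 := by linarith
  have hb1 : (0:ℝ) < b+1 := by linarith
  have t1 : (3*(a+1)^2/(a+b+2)^2) * (b * (2/(q^2*(a+1)^2))) = (6*b)/(q^2*(a+b+2)^2) := by
    rw [mul_div_assoc' b 2 (q^2*(a+1)^2), div_mul_div_comm]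
    rw [show 3*(a+1)^2*(b*2) = (a+1)^2 * (6*b) by ring,
       show (a+b+2)^2*(q^2*(a+1)^2) = (a+1)^2 * (q^2*(a+b+2)^2) by ring]
    exact mul_div_mul_left _ _ (by positivity)
  have t2 : (3*(b+1)^2/(a+b+2)^2) * (a * (2/(q^2*(b+1)^2))) = (6*a)/(q^2*(a+b+2)^2) := by
    rw [mul_div_assoc' a 2 (q^2*(b+1)^2), div_mul_div_comm]
    rw [show 3*(b+1)^2*(a*2) = (b+1)^2 * (6*a) by ring,
       show (a+b+2)^2*(q^2*(b+1)^2) = (b+1)^2 * (q^2*(a+b+2)^2) by ring]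
    exact mul_div_mul_left _ _ (by positivity)
  have t3 : 48 * ((1/(q*(a+1))) * (1/(q*(b+1)))) = 48/(q^2*((a+1)*(b+1))) := by
    rw [div_mul_div_comm, one_mul, mul_one_div]
    congr 1; ring
  rw [t1, t2, t3]
  have b1 : (6*b)/(q^2*(a+b+2)^2) + (6*a)/(q^2*(a+b+2)^2)
      = (6*b+6*a)/(q^2*(a+b+2)^2) := (add_div _ _ _).symm
  have b2 : (6*b+6*a)/(q^2*(a+b+2)^2) ≤ (6*(a+b+2))/(q^2*(a+b+2)^2) := by
    gcongr
    linarith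
  have b3 : (6*(a+b+2))/(q^2*(a+b+2)^2) = 6/(q^2*(a+b+2)) := by
    rw [show 6*(a+b+2) = (a+b+2)*6 by ring,
       show q^2*(a+b+2)^2 = (a+b+2)*(q^2*(a+b+2)) by ring]
    exact mul_div_mul_left _ _ hNpos.ne'
  have b4 : 48/(q^2*((a+1)*(b+1))) ≤ 96/(q^2*(a+b+2)) := by
    rw [div_le_div_iff₀ (by positivity) (by positivity)]
    have key : (0:ℝ) ≤ 2*a*b + a + b := by positivity
    nlinarith [mul_nonneg (sq_nonneg q) key]
  have b7 : (108/q^2)/(a+b+2) = 108/(q^2*(a+b+2)) := div_div _ _ _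
  have b8 : 6/(q^2*(a+b+2)) + 96/(q^2*(a+b+2)) = 102/(q^2*(a+b+2)) := by
    rw [← add_div]; norm_num
  have b9 : (102:ℝ)/(q^2*(a+b+2)) ≤ 108/(q^2*(a+b+2)) := by
    gcongr <;> norm_num
  linarith


variable {Ω : Type} [MeasurableSpace Ω] {μ : Measure Ω}

lemma integrable_of_bound [IsFiniteMeasure μ] {f : Ω → ℝ} (hm : AEStronglyMeasurable f μ)
    (C : ℝ) (h : ∀ᵐ ω ∂μ, |f ω| ≤ C) : Integrable f μ :=
  (integrable_const C).mono' hm (by simpa [Real.norm_eq_abs] using h)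

lemma part1 (μ : Measure Ω) [IsProbabilityMeasure μ]
    {q : ℝ} (hq0 : 0 < q) (hq1 : q < 1) (n₁ n₂ : ℕ) {T₁ T₂ ξ c : Ω → ℕ}
    (hT₁ : Measurable T₁) (hT₂ : Measurable T₂) (hξ : Measurable ξ) (hcm : Measurable c)
    (hd1 : ∀ k, μ {ω | T₁ ω = k} = ENNReal.ofReal (w q n₁ k))
    (hd2 : ∀ k, μ {ω | T₂ ω = k} = ENNReal.ofReal (w q n₂ k))
    (hξ1 : ∀ ω, ξ ω ≤ 1) (hc1 : ∀ ω, c ω ≤ 1)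
    (hind : IndepFun T₁ T₂ μ) :
    (∫ ω, (((T₂ ω : ℝ) + (c ω : ℝ)) / ((T₁ ω : ℝ) + (T₂ ω : ℝ) + (ξ ω : ℝ) + 1)) ^ 2 ∂μ)
      - (∫ ω, ((T₂ ω : ℝ) + (c ω : ℝ)) / ((T₁ ω : ℝ) + (T₂ ω : ℝ) + (ξ ω : ℝ) + 1) ∂μ) ^ 2
      ≤ (108 / q^2) / ((n₁:ℝ) + (n₂:ℝ) + 2) := by
  set l : Ω → ℝ := fun ω => ((T₂ ω : ℝ) + (c ω : ℝ))
      / ((T₁ ω : ℝ) + (T₂ ω : ℝ) + (ξ ω : ℝ) + 1) with hl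
  have hm1 : Measurable fun ω => (T₁ ω : ℝ) := measurable_from_nat.comp hT₁
  have hm2 : Measurable fun ω => (T₂ ω : ℝ) := measurable_from_nat.comp hT₂
  have hmξ : Measurable fun ω => (ξ ω : ℝ) := measurable_from_nat.comp hξ
  have hmc : Measurable fun ω => (c ω : ℝ) := measurable_from_nat.comp hcm
  have hml : Measurable l := (hm2.add hmc).div ((hm1.add hm2).add hmξ |>.add measurable_const)
  have hden : ∀ ω, (0:ℝ) < (T₁ ω : ℝ) + (T₂ ω : ℝ) + (ξ ω : ℝ) + 1 := by
    intro ω; positivity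
  have hl0 : ∀ ω, 0 ≤ l ω := by
    intro ω; apply div_nonneg _ (hden ω).le; positivity
  have hl1 : ∀ ω, l ω ≤ 1 := by
    intro ω
    rw [hl, div_le_one (hden ω)]
    have : (c ω : ℝ) ≤ 1 := by exact_mod_cast hc1 ω
    have h1 : (0:ℝ) ≤ (T₁ ω : ℝ) := Nat.cast_nonneg _
    have h2 : (0:ℝ) ≤ (ξ ω : ℝ) := Nat.cast_nonneg _
    linarith
  have hInt1 : Integrable l μ := by
    apply integrable_of_bound hml.aestronglyMeasurable 1
    filter_upwards with ω
    rw [abs_le]; exact ⟨by linarith [hl0 ω], hl1 ω⟩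
  have hInt2 : Integrable (fun ω => (l ω)^2) μ := by
    apply integrable_of_bound (hml.pow_const 2).aestronglyMeasurable 1
    filter_upwards with ω
    rw [abs_le]
    constructor
    · nlinarith [sq_nonneg (l ω)]
    · nlinarith [hl0 ω, hl1 ω]
  set a : ℝ := ((n₂:ℝ)+1)/((n₁:ℝ)+(n₂:ℝ)+2) with ha
  -- Step 1 : Var ≤ E (l - a)^2
  have step1 : (∫ ω, (l ω)^2 ∂μ) - (∫ ω, l ω ∂μ)^2 ≤ ∫ ω, (l ω - a)^2 ∂μ := by
    have e : (fun ω => (l ω - a)^2) = fun ω => (l ω)^2 + ((-2*a) * l ω + a^2) := by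
      funext ω; ring
    have intf : Integrable (fun ω => -2*a*l ω) μ := by exact hInt1.const_mul _
    have intg : Integrable (fun ω => -2*a*l ω + a^2) μ := by
      exact intf.add (integrable_const _)
    rw [e, integral_add hInt2 intg, integral_add intf (integrable_const _),
      integral_const_mul, integral_const]
    simp only [measure_univ, ENNReal.toReal_one, probReal_univ, smul_eq_mul, one_mul]
    nlinarith [sq_nonneg ((∫ ω, l ω ∂μ) - a)]
  -- bound functions
  set g₁ : ℕ → ℝ := fun k => ((k:ℝ) - (n₁:ℝ)*q)^2 with hg₁
  set g₂ : ℕ → ℝ := fun k => ((k:ℝ) - (n₂:ℝ)*q)^2 with hg₂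
  set hh : ℕ → ℝ := fun k => 1/((k:ℝ)+1)^2 with hhh
  set ee : ℕ → ℝ := fun k => 1/((k:ℝ)+1) with hee
  set c₁ : ℝ := 3*((n₁:ℝ)+1)^2/((n₁:ℝ)+(n₂:ℝ)+2)^2 with hc₁
  set c₂ : ℝ := 3*((n₂:ℝ)+1)^2/((n₁:ℝ)+(n₂:ℝ)+2)^2 with hc₂
  set B : Ω → ℝ := fun ω => c₁ * (g₂ (T₂ ω) * hh (T₁ ω)) + c₂ * (g₁ (T₁ ω) * hh (T₂ ω))
      + 48 * (ee (T₁ ω) * ee (T₂ ω)) with hB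
  have hpt : ∀ ω, (l ω - a)^2 ≤ B ω := by
    intro ω
    have := pointwise_bound (q := q) (a := (n₁:ℝ)) (b := (n₂:ℝ)) hq0 hq1.le
      (Nat.cast_nonneg _) (Nat.cast_nonneg _)
      (x := (T₁ ω : ℝ)) (y := (T₂ ω : ℝ)) (z := (ξ ω : ℝ)) (u := (c ω : ℝ))
      (Nat.cast_nonneg _) (Nat.cast_nonneg _) (Nat.cast_nonneg _)
      (by exact_mod_cast hξ1 ω) (Nat.cast_nonneg _) (by exact_mod_cast hc1 ω)
    exact this
  -- integrability of B parts
  have hbd1 : ∀ᵐ ω ∂μ, T₁ ω ≤ n₁ := ae_le_of_dist hd1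
  have hbd2 : ∀ᵐ ω ∂μ, T₂ ω ≤ n₂ := ae_le_of_dist hd2
  have hh1 : ∀ k : ℕ, 0 ≤ hh k ∧ hh k ≤ 1 := by
    intro k
    constructor
    · positivity
    · rw [hhh]
      have : (1:ℝ) ≤ ((k:ℝ)+1)^2 := by nlinarith [Nat.cast_nonneg (α := ℝ) k]
      simp only
      rw [div_le_one (by positivity)]; linarith
  have hee1 : ∀ k : ℕ, 0 ≤ ee k ∧ ee k ≤ 1 := by
    intro k
    constructor
    · positivity
    · rw [hee]
      have : (1:ℝ) ≤ ((k:ℝ)+1) := by linarith [Nat.cast_nonneg (α := ℝ) k]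
      simp only
      rw [div_le_one (by positivity)]; linarith
  have hgb : ∀ (n : ℕ) (k : ℕ), k ≤ n → ((k:ℝ) - (n:ℝ)*q)^2 ≤ ((n:ℝ))^2 := by
    intro n k hk
    have hk' : (k:ℝ) ≤ (n:ℝ) := by exact_mod_cast hk
    have h0 : (0:ℝ) ≤ (k:ℝ) := Nat.cast_nonneg _
    have h1 : (0:ℝ) ≤ (n:ℝ)*q := by positivity
    have h2 : (n:ℝ)*q ≤ (n:ℝ) := by nlinarith [Nat.cast_nonneg (α := ℝ) n]
    nlinarith
  have hI1 : Integrable (fun ω => g₂ (T₂ ω) * hh (T₁ ω)) μ := by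
    refine integrable_of_bound ?_ ((n₂:ℝ)^2) ?_
    · exact (((measurable_from_nat (f := g₂)).comp hT₂).mul
        ((measurable_from_nat (f := hh)).comp hT₁)).aestronglyMeasurable
    · filter_upwards [hbd2] with ω h2
      rw [abs_mul, abs_of_nonneg (by rw [hg₂]; positivity), abs_of_nonneg (hh1 _).1]
      calc g₂ (T₂ ω) * hh (T₁ ω) ≤ ((n₂:ℝ))^2 * 1 :=
            mul_le_mul (hgb n₂ _ h2) (hh1 _).2 (hh1 _).1 (by positivity)
        _ = ((n₂:ℝ))^2 := mul_one _
  have hI2 : Integrable (fun ω => g₁ (T₁ ω) * hh (T₂ ω)) μ := by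
    refine integrable_of_bound ?_ ((n₁:ℝ)^2) ?_
    · exact (((measurable_from_nat (f := g₁)).comp hT₁).mul
        ((measurable_from_nat (f := hh)).comp hT₂)).aestronglyMeasurable
    · filter_upwards [hbd1] with ω h1
      rw [abs_mul, abs_of_nonneg (by rw [hg₁]; positivity), abs_of_nonneg (hh1 _).1]
      calc g₁ (T₁ ω) * hh (T₂ ω) ≤ ((n₁:ℝ))^2 * 1 :=
            mul_le_mul (hgb n₁ _ h1) (hh1 _).2 (hh1 _).1 (by positivity)
        _ = ((n₁:ℝ))^2 := mul_one _
  have hI3 : Integrable (fun ω => ee (T₁ ω) * ee (T₂ ω)) μ := by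
    refine integrable_of_bound ?_ 1 ?_
    · exact (((measurable_from_nat (f := ee)).comp hT₁).mul
        ((measurable_from_nat (f := ee)).comp hT₂)).aestronglyMeasurable
    · filter_upwards with ω
      rw [abs_mul, abs_of_nonneg (hee1 _).1, abs_of_nonneg (hee1 _).1]
      calc ee (T₁ ω) * ee (T₂ ω) ≤ 1 * 1 :=
            mul_le_mul (hee1 _).2 (hee1 _).2 (hee1 _).1 (by norm_num)
        _ = 1 := mul_one _
  have hIntB : Integrable B μ := ((hI1.const_mul c₁).add (hI2.const_mul c₂)).add
    (hI3.const_mul 48)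
  have step2 : ∫ ω, (l ω - a)^2 ∂μ ≤ ∫ ω, B ω ∂μ := by
    apply integral_mono_of_nonneg
    · filter_upwards with ω; exact sq_nonneg _
    · exact hIntB
    · filter_upwards with ω; exact hpt ω
  have step3 : ∫ ω, B ω ∂μ
      = c₁ * ((∫ ω, g₂ (T₂ ω) ∂μ) * ∫ ω, hh (T₁ ω) ∂μ)
      + c₂ * ((∫ ω, g₁ (T₁ ω) ∂μ) * ∫ ω, hh (T₂ ω) ∂μ)
      + 48 * ((∫ ω, ee (T₁ ω) ∂μ) * ∫ ω, ee (T₂ ω) ∂μ) := by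
    have i1 : Integrable (fun ω => c₁ * (g₂ (T₂ ω) * hh (T₁ ω))) μ := by
      exact hI1.const_mul _
    have i2 : Integrable (fun ω => c₂ * (g₁ (T₁ ω) * hh (T₂ ω))) μ := by
      exact hI2.const_mul _
    have i3 : Integrable (fun ω => (48:ℝ) * (ee (T₁ ω) * ee (T₂ ω))) μ := by
      exact hI3.const_mul _
    have i12 : Integrable (fun ω => c₁ * (g₂ (T₂ ω) * hh (T₁ ω))
        + c₂ * (g₁ (T₁ ω) * hh (T₂ ω))) μ := by exact i1.add i2
    simp only [hB]
    rw [integral_add i12 i3, integral_add i1 i2,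
      integral_const_mul, integral_const_mul, integral_const_mul]
    rw [indep_integral_mul hT₂ hT₁ hind.symm g₂ hh,
      indep_integral_mul hT₁ hT₂ hind g₁ hh,
      indep_integral_mul hT₁ hT₂ hind ee ee]
  -- expectation bounds
  have Eg₂ : ∫ ω, g₂ (T₂ ω) ∂μ ≤ (n₂:ℝ) := by
    rw [integral_comp hT₂ hq0.le hq1.le hd2 g₂]
    exact sum_var hq0.le hq1.le n₂
  have Eg₂0 : 0 ≤ ∫ ω, g₂ (T₂ ω) ∂μ := integral_nonneg fun ω => by rw [hg₂]; positivity
  have Eg₁ : ∫ ω, g₁ (T₁ ω) ∂μ ≤ (n₁:ℝ) := by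
    rw [integral_comp hT₁ hq0.le hq1.le hd1 g₁]
    exact sum_var hq0.le hq1.le n₁
  have Eg₁0 : 0 ≤ ∫ ω, g₁ (T₁ ω) ∂μ := integral_nonneg fun ω => by rw [hg₁]; positivity
  have Eh₁ : ∫ ω, hh (T₁ ω) ∂μ ≤ 2/(q^2*((n₁:ℝ)+1)^2) := by
    rw [integral_comp hT₁ hq0.le hq1.le hd1 hh]
    exact sum_inv_sq hq0 hq1.le n₁
  have Eh₁0 : 0 ≤ ∫ ω, hh (T₁ ω) ∂μ := integral_nonneg fun ω => (hh1 _).1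
  have Eh₂ : ∫ ω, hh (T₂ ω) ∂μ ≤ 2/(q^2*((n₂:ℝ)+1)^2) := by
    rw [integral_comp hT₂ hq0.le hq1.le hd2 hh]
    exact sum_inv_sq hq0 hq1.le n₂
  have Eh₂0 : 0 ≤ ∫ ω, hh (T₂ ω) ∂μ := integral_nonneg fun ω => (hh1 _).1
  have Ee₁ : ∫ ω, ee (T₁ ω) ∂μ ≤ 1/(q*((n₁:ℝ)+1)) := by
    rw [integral_comp hT₁ hq0.le hq1.le hd1 ee]
    exact sum_inv hq0 hq1.le n₁
  have Ee₁0 : 0 ≤ ∫ ω, ee (T₁ ω) ∂μ := integral_nonneg fun ω => (hee1 _).1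
  have Ee₂ : ∫ ω, ee (T₂ ω) ∂μ ≤ 1/(q*((n₂:ℝ)+1)) := by
    rw [integral_comp hT₂ hq0.le hq1.le hd2 ee]
    exact sum_inv hq0 hq1.le n₂
  have Ee₂0 : 0 ≤ ∫ ω, ee (T₂ ω) ∂μ := integral_nonneg fun ω => (hee1 _).1
  have hc₁0 : 0 ≤ c₁ := by rw [hc₁]; positivity
  have hc₂0 : 0 ≤ c₂ := by rw [hc₂]; positivity
  have bnd : c₁ * ((∫ ω, g₂ (T₂ ω) ∂μ) * ∫ ω, hh (T₁ ω) ∂μ)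
      + c₂ * ((∫ ω, g₁ (T₁ ω) ∂μ) * ∫ ω, hh (T₂ ω) ∂μ)
      + 48 * ((∫ ω, ee (T₁ ω) ∂μ) * ∫ ω, ee (T₂ ω) ∂μ)
      ≤ c₁ * ((n₂:ℝ) * (2/(q^2*((n₁:ℝ)+1)^2)))
      + c₂ * ((n₁:ℝ) * (2/(q^2*((n₂:ℝ)+1)^2)))
      + 48 * ((1/(q*((n₁:ℝ)+1))) * (1/(q*((n₂:ℝ)+1)))) := by
    have m1 : (∫ ω, g₂ (T₂ ω) ∂μ) * ∫ ω, hh (T₁ ω) ∂μ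
        ≤ (n₂:ℝ) * (2/(q^2*((n₁:ℝ)+1)^2)) :=
      mul_le_mul Eg₂ Eh₁ Eh₁0 (Nat.cast_nonneg _)
    have m2 : (∫ ω, g₁ (T₁ ω) ∂μ) * ∫ ω, hh (T₂ ω) ∂μ
        ≤ (n₁:ℝ) * (2/(q^2*((n₂:ℝ)+1)^2)) :=
      mul_le_mul Eg₁ Eh₂ Eh₂0 (Nat.cast_nonneg _)
    have m3 : (∫ ω, ee (T₁ ω) ∂μ) * ∫ ω, ee (T₂ ω) ∂μ
        ≤ (1/(q*((n₁:ℝ)+1))) * (1/(q*((n₂:ℝ)+1))) :=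
      mul_le_mul Ee₁ Ee₂ Ee₂0 (by positivity)
    have := mul_le_mul_of_nonneg_left m1 hc₁0
    have := mul_le_mul_of_nonneg_left m2 hc₂0
    have := mul_le_mul_of_nonneg_left m3 (by norm_num : (0:ℝ) ≤ 48)
    linarith
  have num := numeric (a := (n₁:ℝ)) (b := (n₂:ℝ)) hq0 hq1.le
    (Nat.cast_nonneg _) (Nat.cast_nonneg _)
  rw [hc₁, hc₂] at bnd
  linarith [step1, step2, step3, bnd, num]




lemma part2 (μ : Measure Ω) [IsProbabilityMeasure μ]
    {q : ℝ} (hq0 : 0 < q) (hq1 : q < 1) {M : ℕ} (hM : 1 ≤ M)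
    {T : Ω → ℕ} {Y : ℕ → Ω → ℝ} (hT : Measurable T)
    (hdT : ∀ k, μ {ω | T ω = k} = ENNReal.ofReal (w q M k))
    (hY : ∀ j, Measurable (Y j))
    (hYindep : iIndepFun Y μ)
    (hYb : ∀ j, ∀ᵐ ω ∂μ, Y j ω ∈ Set.Icc (0:ℝ) 1)
    {m s : ℝ}
    (hmean : ∀ j, ∫ ω, Y j ω ∂μ = m)
    (hsq : ∀ j, ∫ ω, (Y j ω)^2 ∂μ = s)
    (hindTY : IndepFun T (fun ω (j : ℕ) => Y j ω) μ)
    (hv0 : 0 ≤ s - m^2) :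
    (∫ ω, ((∑ j ∈ Finset.range (T ω), Y j ω) / (T ω : ℝ)) ^ 2 ∂(μ[|{ω | 1 ≤ T ω}]))
      - (∫ ω, (∑ j ∈ Finset.range (T ω), Y j ω) / (T ω : ℝ) ∂(μ[|{ω | 1 ≤ T ω}])) ^ 2
      ≤ (s - m^2) * (2/(q^2 * (M:ℝ))) := by
  classical
  have h1q0 : (0:ℝ) ≤ 1 - q := by linarith
  have h1q1 : 1 - q ≤ 1 := by linarith
  -- the good set
  set G : Set Ω := {ω | 1 ≤ T ω} with hG
  have hGmeas : MeasurableSet G := hT measurableSet_Ici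
  have hGc : G = {ω | T ω = 0}ᶜ := by
    ext ω; simp [hG, Nat.one_le_iff_ne_zero]
  have hT0 : μ {ω | T ω = 0} = ENNReal.ofReal ((1-q)^M) := by
    have := hdT 0; simpa [w] using this
  have hle1 : ENNReal.ofReal ((1-q)^M) ≤ 1 := by
    exact ENNReal.ofReal_le_one.2 (pow_le_one₀ h1q0 h1q1)
  have hμG : μ G = 1 - ENNReal.ofReal ((1-q)^M) := by
    rw [hGc, measure_compl (show MeasurableSet {ω | T ω = 0} from hT (measurableSet_singleton 0)) (measure_ne_top μ _), hT0]
    simp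
  set P : ℝ := (μ G).toReal with hPdef
  have hP : P = 1 - (1-q)^M := by
    rw [hPdef, hμG, ENNReal.toReal_sub_of_le hle1 (by simp)]
    simp [ENNReal.toReal_ofReal (by positivity : (0:ℝ) ≤ (1-q)^M)]
  have hPq : q ≤ P := by
    rw [hP]
    have : (1-q)^M ≤ 1-q := pow_le_of_le_one h1q0 h1q1 (by omega)
    linarith
  have hPpos : 0 < P := lt_of_lt_of_le hq0 hPq
  have hGne : μ G ≠ 0 := by
    intro h; rw [hPdef, h] at hPpos; simp at hPpos
  have hGfin : μ G ≠ ⊤ := measure_ne_top μ _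
  -- a.e. T ≤ M
  have hTM : ∀ᵐ ω ∂μ, T ω ≤ M := ae_le_of_dist hdT
  -- a.e. equality of G with finite union
  set U : Set Ω := ⋃ t ∈ Finset.Icc 1 M, {ω | T ω = t} with hU
  have hGU : G =ᵐ[μ] U := by
    rw [Filter.eventuallyEq_set]
    filter_upwards [hTM] with ω hω
    simp only [hG, hU, Set.mem_setOf_eq, Set.mem_iUnion, Finset.mem_Icc]
    constructor
    · intro h; exact ⟨T ω, ⟨⟨h, hω⟩, rfl⟩⟩
    · rintro ⟨t, ⟨⟨h1, _⟩, h2⟩⟩; omega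
  -- generic decomposition
  have hdec : ∀ (f : Ω → ℝ), Integrable f μ →
      ∫ ω in G, f ω ∂μ = ∑ t ∈ Finset.Icc 1 M, ∫ ω in {ω | T ω = t}, f ω ∂μ := by
    intro f hf
    rw [setIntegral_congr_set hGU, hU]
    refine integral_biUnion_finset _ (fun t _ => hT (measurableSet_singleton t)) ?_
      (fun t _ => hf.integrableOn)
    intro i _ j _ hij
    simp only [Function.onFun, Set.disjoint_left]
    intro ω h1 h2
    exact hij (by simp only [Set.mem_setOf_eq] at h1 h2; omega)
  -- the averaged functions
  set F : ℕ → Ω → ℝ := fun t ω => (∑ j ∈ Finset.range t, Y j ω) / (t:ℝ) with hF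
  have hFmeas : ∀ t, Measurable (F t) := fun t =>
    (Finset.measurable_sum (Finset.range t) (fun j _ => hY j)).div_const _
  set Z : Ω → ℝ := fun ω => (∑ j ∈ Finset.range (T ω), Y j ω) / (T ω : ℝ) with hZ
  have hZF : ∀ ω, Z ω = F (T ω) ω := fun ω => rfl
  have hZmeas : Measurable Z := by
    have h1 : Measurable (fun p : Ω × ℕ => F p.2 p.1) :=
      measurable_from_prod_countable_left (fun t => hFmeas t)
    exact h1.comp (measurable_id.prodMk hT)
  have hYball : ∀ᵐ ω ∂μ, ∀ j, Y j ω ∈ Set.Icc (0:ℝ) 1 := (ae_all_iff).2 hYb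
  have hFb : ∀ᵐ ω ∂μ, ∀ t, F t ω ∈ Set.Icc (0:ℝ) 1 := by
    filter_upwards [hYball] with ω hω
    intro t
    rcases Nat.eq_zero_or_pos t with h|h
    · subst h; simp [hF]
    · have ht : (0:ℝ) < t := by exact_mod_cast h
      have hsum0 : 0 ≤ ∑ j ∈ Finset.range t, Y j ω :=
        Finset.sum_nonneg fun j _ => (hω j).1
      have hsum1 : ∑ j ∈ Finset.range t, Y j ω ≤ t := by
        calc ∑ j ∈ Finset.range t, Y j ω ≤ ∑ _j ∈ Finset.range t, (1:ℝ) :=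
              Finset.sum_le_sum fun j _ => (hω j).2
          _ = t := by simp
      simp only [hF]
      exact Set.mem_Icc.2 ⟨div_nonneg hsum0 ht.le, by rw [div_le_one ht]; exact hsum1⟩
  have hZb : ∀ᵐ ω ∂μ, Z ω ∈ Set.Icc (0:ℝ) 1 := by
    filter_upwards [hFb] with ω hω
    rw [hZF]; exact hω _
  have hZint : Integrable Z μ := by
    apply integrable_of_bound hZmeas.aestronglyMeasurable 1
    filter_upwards [hZb] with ω h; rw [abs_le]; exact ⟨by linarith [h.1], h.2⟩
  have hZ2int : Integrable (fun ω => (Z ω)^2) μ := by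
    apply integrable_of_bound (hZmeas.pow_const 2).aestronglyMeasurable 1
    filter_upwards [hZb] with ω h
    rw [abs_le]; constructor
    · nlinarith [sq_nonneg (Z ω)]
    · nlinarith [h.1, h.2]
  have hYint : ∀ j, Integrable (Y j) μ := fun j => by
    apply integrable_of_bound (hY j).aestronglyMeasurable 1
    filter_upwards [hYb j] with ω h; rw [abs_le]; exact ⟨by linarith [h.1], h.2⟩
  have hYmem : ∀ j, MemLp (Y j) 2 μ := fun j =>
    MemLp.of_bound (hY j).aestronglyMeasurable 1 (by
      filter_upwards [hYb j] with ω h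
      rw [Real.norm_eq_abs, abs_le]; exact ⟨by linarith [h.1], h.2⟩)
  have hvar : ∀ j, variance (Y j) μ = s - m^2 := fun j => by
    rw [variance_eq_sub (hYmem j)]
    have e2 : integral μ ((Y j)^2) = s := by
      rw [show (Y j)^2 = fun ω => (Y j ω)^2 from rfl]; exact hsq j
    have e1 : integral μ (Y j) = m := hmean j
    rw [e2, e1]
  have hFint : ∀ t, Integrable (F t) μ := fun t => by
    apply integrable_of_bound (hFmeas t).aestronglyMeasurable 1
    filter_upwards [hFb] with ω h
    rw [abs_le]; exact ⟨by linarith [(h t).1], (h t).2⟩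
  have hF2int : ∀ t, Integrable (fun ω => (F t ω)^2) μ := fun t => by
    apply integrable_of_bound ((hFmeas t).pow_const 2).aestronglyMeasurable 1
    filter_upwards [hFb] with ω h
    rw [abs_le]; constructor
    · nlinarith [sq_nonneg (F t ω)]
    · nlinarith [(h t).1, (h t).2]
  -- mean and second moment of F t
  have E_F : ∀ t : ℕ, 1 ≤ t → ∫ ω, F t ω ∂μ = m := by
    intro t ht
    have htR : ((t:ℝ)) ≠ 0 := by positivity
    simp only [hF]
    rw [integral_div, integral_finset_sum _ (fun j _ => hYint j)]
    simp only [hmean]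
    rw [Finset.sum_const, Finset.card_range, nsmul_eq_mul]
    field_simp
  have E_F2 : ∀ t : ℕ, 1 ≤ t → ∫ ω, (F t ω)^2 ∂μ = (s - m^2)/t + m^2 := by
    intro t ht
    have htR : ((t:ℝ)) ≠ 0 := by positivity
    have hsum_mem : MemLp (∑ j ∈ Finset.range t, Y j) 2 μ :=
      memLp_finset_sum' _ (fun j _ => hYmem j)
    have hFsmul : F t = (t:ℝ)⁻¹ • (∑ j ∈ Finset.range t, Y j) := by
      funext ω
      simp [hF, Finset.sum_apply, div_eq_inv_mul]
    have hFmem : MemLp (F t) 2 μ := by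
      rw [hFsmul]; exact hsum_mem.const_smul _
    have hvs : variance (∑ j ∈ Finset.range t, Y j) μ = t * (s - m^2) := by
      rw [IndepFun.variance_sum (fun j _ => hYmem j)
        (fun i _ j _ hij => hYindep.indepFun hij)]
      simp only [hvar]
      rw [Finset.sum_const, Finset.card_range, nsmul_eq_mul]
    have hvF : variance (F t) μ = ((t:ℝ)⁻¹)^2 * (t * (s - m^2)) := by
      rw [hFsmul, variance_smul, hvs]
    have hdef := variance_eq_sub hFmem
    have eF2 : integral μ ((F t)^2) = ∫ ω, (F t ω)^2 ∂μ := rfl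
    have eF1 : integral μ (F t) = m := E_F t ht
    rw [eF2, eF1, hvF] at hdef
    have : ∫ ω, (F t ω)^2 ∂μ = ((t:ℝ)⁻¹)^2 * (t * (s - m^2)) + m^2 := by linarith
    rw [this]; field_simp
  -- splitting on the value of T and using independence
  have hYvec : Measurable (fun ω (j : ℕ) => Y j ω) :=
    measurable_pi_lambda _ (fun j => hY j)
  have hsplit : ∀ (t : ℕ) (ψ : (ℕ → ℝ) → ℝ), Measurable ψ →
      Integrable (fun ω => ψ (fun j => Y j ω)) μ →
      ∫ ω in {ω | T ω = t}, ψ (fun j => Y j ω) ∂μ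
        = w q M t * ∫ ω, ψ (fun j => Y j ω) ∂μ := by
    intro t ψ hψ hint
    have hset : MeasurableSet {ω | T ω = t} := hT (measurableSet_singleton t)
    rw [← integral_indicator hset]
    have hip : (Set.indicator {ω | T ω = t} (fun ω => ψ (fun j => Y j ω)))
        = fun ω => (if T ω = t then (1:ℝ) else 0) * ψ (fun j => Y j ω) := by
      funext ω; by_cases h : T ω = t <;> simp [Set.indicator, h]
    rw [hip]
    have hφm : Measurable (fun ω => if T ω = t then (1:ℝ) else 0) :=
      (measurable_from_nat (f := fun k : ℕ => if k = t then (1:ℝ) else 0)).comp hT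
    have hψm : Measurable (fun ω => ψ (fun j => Y j ω)) := hψ.comp hYvec
    have hif : IndepFun (fun ω => if T ω = t then (1:ℝ) else 0)
        (fun ω => ψ (fun j => Y j ω)) μ :=
      hindTY.comp (measurable_from_nat (f := fun k : ℕ => if k = t then (1:ℝ) else 0)) hψ
    have hmul := hif.integral_mul_eq_mul_integral hφm.aestronglyMeasurable hψm.aestronglyMeasurable
    have hgoal : ∫ ω, (if T ω = t then (1:ℝ) else 0) * ψ (fun j => Y j ω) ∂μ
        = (∫ ω, (if T ω = t then (1:ℝ) else 0) ∂μ) * ∫ ω, ψ (fun j => Y j ω) ∂μ := hmul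
    rw [hgoal]
    congr 1
    have hieq : (fun ω => if T ω = t then (1:ℝ) else 0)
        = Set.indicator {ω | T ω = t} (fun _ => (1:ℝ)) := by
      funext ω; by_cases h : T ω = t <;> simp [Set.indicator, h]
    rw [hieq, integral_indicator_const _ hset, measureReal_def, hdT t, smul_eq_mul, mul_one,
      ENNReal.toReal_ofReal (w_nonneg hq0.le hq1.le M t)]
  -- per-piece values
  have piece1 : ∀ t ∈ Finset.Icc 1 M, ∫ ω in {ω | T ω = t}, Z ω ∂μ = w q M t * m := by
    intro t htmem
    have ht : 1 ≤ t := (Finset.mem_Icc.1 htmem).1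
    have hset : MeasurableSet {ω | T ω = t} := hT (measurableSet_singleton t)
    have hcong : ∫ ω in {ω | T ω = t}, Z ω ∂μ = ∫ ω in {ω | T ω = t}, F t ω ∂μ :=
      setIntegral_congr_fun hset (fun ω hω => by
        rw [hZF ω, show T ω = t from hω])
    rw [hcong]
    have hψm : Measurable (fun y : ℕ → ℝ => (∑ j ∈ Finset.range t, y j)/(t:ℝ)) :=
      (Finset.measurable_sum _ (fun j _ => measurable_pi_apply j)).div_const _
    have heq : (fun ω => (fun y : ℕ → ℝ => (∑ j ∈ Finset.range t, y j)/(t:ℝ))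
        (fun j => Y j ω)) = F t := rfl
    have hs := hsplit t (fun y : ℕ → ℝ => (∑ j ∈ Finset.range t, y j)/(t:ℝ)) hψm
      (heq ▸ hFint t)
    rw [heq] at hs
    rw [hs, E_F t ht]
  have piece2 : ∀ t ∈ Finset.Icc 1 M, ∫ ω in {ω | T ω = t}, (Z ω)^2 ∂μ
      = w q M t * ((s - m^2)/t + m^2) := by
    intro t htmem
    have ht : 1 ≤ t := (Finset.mem_Icc.1 htmem).1
    have hset : MeasurableSet {ω | T ω = t} := hT (measurableSet_singleton t)
    have hcong : ∫ ω in {ω | T ω = t}, (Z ω)^2 ∂μ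
        = ∫ ω in {ω | T ω = t}, (F t ω)^2 ∂μ :=
      setIntegral_congr_fun hset (fun ω hω => by
        rw [hZF ω, show T ω = t from hω])
    rw [hcong]
    have hψm : Measurable (fun y : ℕ → ℝ => ((∑ j ∈ Finset.range t, y j)/(t:ℝ))^2) :=
      ((Finset.measurable_sum _ (fun j _ => measurable_pi_apply j)).div_const _).pow_const 2
    have heq : (fun ω => (fun y : ℕ → ℝ => ((∑ j ∈ Finset.range t, y j)/(t:ℝ))^2)
        (fun j => Y j ω)) = fun ω => (F t ω)^2 := rfl
    have hs := hsplit t (fun y : ℕ → ℝ => ((∑ j ∈ Finset.range t, y j)/(t:ℝ))^2) hψm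
      (heq ▸ hF2int t)
    rw [heq] at hs
    rw [hs, E_F2 t ht]
  -- the sums
  have hI1G : ∫ ω in G, Z ω ∂μ = ∑ t ∈ Finset.Icc 1 M, w q M t * m := by
    rw [hdec Z hZint]; exact Finset.sum_congr rfl piece1
  have hI2G : ∫ ω in G, (Z ω)^2 ∂μ
      = ∑ t ∈ Finset.Icc 1 M, w q M t * ((s - m^2)/t + m^2) := by
    rw [hdec (fun ω => (Z ω)^2) hZ2int]; exact Finset.sum_congr rfl piece2
  have hw0 : w q M 0 = (1-q)^M := by simp [w]
  have hIccR : ∑ t ∈ Finset.Icc 1 M, w q M t = ∑ i ∈ Finset.range M, w q M (i+1) := by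
    rw [← Finset.Ico_add_one_right_eq_Icc, Finset.sum_Ico_eq_sum_range]
    norm_num
    exact Finset.sum_congr rfl fun i _ => by rw [Nat.add_comm]
  have hS0 : ∑ t ∈ Finset.Icc 1 M, w q M t = P := by
    have h := sum_w q M
    rw [Finset.sum_range_succ'] at h
    rw [hIccR, hP]
    rw [hw0] at h
    linarith
  set S₁ : ℝ := ∑ t ∈ Finset.Icc 1 M, w q M t * (1/(t:ℝ)) with hS₁def
  have hS₁nn : 0 ≤ S₁ := Finset.sum_nonneg fun t htm => by
    have ht : 1 ≤ t := (Finset.mem_Icc.1 htm).1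
    have : (0:ℝ) < t := by exact_mod_cast ht
    exact mul_nonneg (w_nonneg hq0.le hq1.le M t) (by positivity)
  have hS₁le : S₁ ≤ 2/(q*(M:ℝ)) := by
    have step1 : S₁ ≤ ∑ t ∈ Finset.Icc 1 M, w q M t * (2*(1/((t:ℝ)+1))) := by
      apply Finset.sum_le_sum
      intro t htm
      have ht : 1 ≤ t := (Finset.mem_Icc.1 htm).1
      have htR : (1:ℝ) ≤ t := by exact_mod_cast ht
      apply mul_le_mul_of_nonneg_left _ (w_nonneg hq0.le hq1.le M t)
      have h2 : (0:ℝ) < (t:ℝ) := by linarith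
      have h3 : (0:ℝ) < (t:ℝ)+1 := by linarith
      rw [show 2*(1/((t:ℝ)+1)) = 2/((t:ℝ)+1) from mul_one_div 2 _,
        div_le_div_iff₀ h2 h3]
      linarith
    have step2 : ∑ t ∈ Finset.Icc 1 M, w q M t * (2*(1/((t:ℝ)+1)))
        ≤ ∑ t ∈ Finset.range (M+1), w q M t * (2*(1/((t:ℝ)+1))) := by
      apply Finset.sum_le_sum_of_subset_of_nonneg
      · intro t htm
        rw [Finset.mem_range]
        have := (Finset.mem_Icc.1 htm).2; omega
      · intro t _ _
        have h1 : (0:ℝ) < (t:ℝ)+1 := by positivity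
        exact mul_nonneg (w_nonneg hq0.le hq1.le M t) (by positivity)
    have step3 : ∑ t ∈ Finset.range (M+1), w q M t * (2*(1/((t:ℝ)+1)))
        = 2 * ∑ t ∈ Finset.range (M+1), w q M t * (1/((t:ℝ)+1)) := by
      rw [Finset.mul_sum]; exact Finset.sum_congr rfl fun t _ => by ring
    have step4 : ∑ t ∈ Finset.range (M+1), w q M t * (1/((t:ℝ)+1))
        ≤ 1/(q*((M:ℝ)+1)) := sum_inv hq0 hq1.le M
    have hMR : (1:ℝ) ≤ M := by exact_mod_cast hM
    have step5 : 2 * (1/(q*((M:ℝ)+1))) ≤ 2/(q*(M:ℝ)) := by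
      rw [mul_one_div, div_le_div_iff₀ (by positivity) (by positivity)]
      nlinarith
    linarith
  -- conditional integrals
  have hcondint : ∀ f : Ω → ℝ, ∫ ω, f ω ∂(μ[|G]) = P⁻¹ * ∫ ω in G, f ω ∂μ := by
    intro f
    rw [ProbabilityTheory.cond, integral_smul_measure, ENNReal.toReal_inv, smul_eq_mul, hPdef]
  rw [hcondint, hcondint, hI1G, hI2G]
  have e1 : ∑ t ∈ Finset.Icc 1 M, w q M t * m = m * P := by
    rw [← hS0, Finset.mul_sum]; exact Finset.sum_congr rfl fun t _ => by ring
  have e2 : ∑ t ∈ Finset.Icc 1 M, w q M t * ((s - m^2)/t + m^2)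
      = (s - m^2) * S₁ + m^2 * P := by
    rw [hS₁def, ← hS0, Finset.mul_sum, Finset.mul_sum, ← Finset.sum_add_distrib]
    exact Finset.sum_congr rfl fun t _ => by ring
  rw [e1, e2]
  have hPinv : P⁻¹ * P = 1 := inv_mul_cancel₀ hPpos.ne'
  have lhs_eq : P⁻¹ * ((s - m^2) * S₁ + m^2 * P) - (P⁻¹ * (m * P))^2
      = (s - m^2) * S₁ * P⁻¹ := by
    have : P⁻¹ * (m * P) = m := by
      rw [show P⁻¹ * (m * P) = m * (P⁻¹ * P) by ring, hPinv, mul_one]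
    rw [this]
    have : P⁻¹ * (m^2 * P) = m^2 := by
      rw [show P⁻¹ * (m^2 * P) = m^2 * (P⁻¹ * P) by ring, hPinv, mul_one]
    calc P⁻¹ * ((s - m^2) * S₁ + m^2 * P) - m^2
        = (s - m^2) * S₁ * P⁻¹ + P⁻¹ * (m^2 * P) - m^2 := by ring
      _ = (s - m^2) * S₁ * P⁻¹ := by rw [this]; ring
  rw [lhs_eq]
  -- final bound
  have hMpos : (0:ℝ) < M := by exact_mod_cast hM
  have hPinvle : P⁻¹ ≤ q⁻¹ := by
    apply inv_anti₀ hq0 hPq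
  have b1 : (s - m^2) * S₁ * P⁻¹ ≤ (s - m^2) * (2/(q*(M:ℝ))) * q⁻¹ := by
    apply mul_le_mul
    · exact mul_le_mul_of_nonneg_left hS₁le hv0
    · exact hPinvle
    · positivity
    · positivity
  have b2' : (2/(q*(M:ℝ))) * q⁻¹ = 2/(q^2*(M:ℝ)) := by
    rw [← one_div, div_mul_div_comm, mul_one]
    congr 1; ring
  have b2 : (s - m^2) * (2/(q*(M:ℝ))) * q⁻¹ = (s - m^2) * (2/(q^2*(M:ℝ))) := by
    rw [mul_assoc, b2']
  linarith [b1]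


end VNLO

/-- With `l = (T₂+c)/(T₁+T₂+ξ+1)`, `T₁ ~ Bin(N₁-1,q)`,
`T₂ ~ Bin(N₂-1,q)`, `ξ ~ Bernoulli(q)` mutually independent and `c ∈ {ξ, 1}`,
one has `Var(l) = O(1/N)` with `N = N₁+N₂`, and the average of `Bin(M,q)`-many
i.i.d. copies (conditioned on at least one copy) has variance `O(1/(MN))`. -/
theorem variance_noise_level_order
    (q : ℝ) (hq0 : 0 < q) (hq1 : q < 1) :
    ∃ C : ℝ, 0 < C ∧
      ∀ (N₁ N₂ M : ℕ), 1 ≤ N₁ → 1 ≤ N₂ → 1 ≤ M →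
      ∀ (Ω : Type) [MeasurableSpace Ω] (μ : Measure Ω) [IsProbabilityMeasure μ]
        (T₁ T₂ ξ : Ω → ℕ),
        Measurable T₁ → Measurable T₂ → Measurable ξ →
        (∀ k : ℕ, μ {ω | T₁ ω = k}
          = ENNReal.ofReal (((N₁ - 1).choose k : ℝ) * q ^ k * (1 - q) ^ (N₁ - 1 - k))) →
        (∀ k : ℕ, μ {ω | T₂ ω = k}
          = ENNReal.ofReal (((N₂ - 1).choose k : ℝ) * q ^ k * (1 - q) ^ (N₂ - 1 - k))) →
        (∀ ω, ξ ω ≤ 1) →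
        μ {ω | ξ ω = 1} = ENNReal.ofReal q →
        iIndepFun ![T₁, T₂, ξ] μ →
        ∀ c : Ω → ℕ, (c = ξ ∨ c = fun _ => 1) →
        -- Var(l) = O(1/N)
        ((∫ ω, (((T₂ ω : ℝ) + (c ω : ℝ))
              / ((T₁ ω : ℝ) + (T₂ ω : ℝ) + (ξ ω : ℝ) + 1)) ^ 2 ∂μ)
          - (∫ ω, ((T₂ ω : ℝ) + (c ω : ℝ))
              / ((T₁ ω : ℝ) + (T₂ ω : ℝ) + (ξ ω : ℝ) + 1) ∂μ) ^ 2
          ≤ C / (N₁ + N₂ : ℝ)) ∧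
        -- averaging Bin(M,q)-many i.i.d. copies gives variance O(1/(MN))
        (∀ (T : Ω → ℕ) (Y : ℕ → Ω → ℝ),
          Measurable T →
          (∀ k : ℕ, μ {ω | T ω = k}
            = ENNReal.ofReal ((M.choose k : ℝ) * q ^ k * (1 - q) ^ (M - k))) →
          (∀ j, Measurable (Y j)) →
          iIndepFun Y μ →
          (∀ j, μ.map (Y j)
            = μ.map (fun ω => ((T₂ ω : ℝ) + (c ω : ℝ))
                / ((T₁ ω : ℝ) + (T₂ ω : ℝ) + (ξ ω : ℝ) + 1))) →
          IndepFun T (fun ω (j : ℕ) => Y j ω) μ →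
          (∫ ω, ((∑ j ∈ Finset.range (T ω), Y j ω) / (T ω : ℝ)) ^ 2
                ∂(μ[|{ω | 1 ≤ T ω}]))
            - (∫ ω, (∑ j ∈ Finset.range (T ω), Y j ω) / (T ω : ℝ)
                ∂(μ[|{ω | 1 ≤ T ω}])) ^ 2
            ≤ C / ((M : ℝ) * (N₁ + N₂ : ℝ))) := by
  refine ⟨1000 / q^4, by positivity, ?_⟩
  intro N₁ N₂ M hN₁ hN₂ hM Ω _ μ _ T₁ T₂ ξ hT₁ hT₂ hξm hd1 hd2 hξ1 hξq hiid c hc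
  obtain ⟨n₁, rfl⟩ : ∃ n, N₁ = n + 1 := ⟨N₁ - 1, by omega⟩
  obtain ⟨n₂, rfl⟩ : ∃ n, N₂ = n + 1 := ⟨N₂ - 1, by omega⟩
  have hd1' : ∀ k, μ {ω | T₁ ω = k} = ENNReal.ofReal (VNLO.w q n₁ k) := by
    intro k; rw [hd1 k]; simp [VNLO.w]
  have hd2' : ∀ k, μ {ω | T₂ ω = k} = ENNReal.ofReal (VNLO.w q n₂ k) := by
    intro k; rw [hd2 k]; simp [VNLO.w]
  have hcm : Measurable c := by
    rcases hc with h | h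
    · rw [h]; exact hξm
    · rw [h]; exact measurable_const
  have hc1 : ∀ ω, c ω ≤ 1 := by
    rcases hc with h | h
    · rw [h]; exact hξ1
    · rw [h]; intro ω; exact le_refl 1
  have hind : IndepFun T₁ T₂ μ := by
    have := hiid.indepFun (show (0 : Fin 3) ≠ 1 by decide)
    simpa using this
  have hq4 : 108 / q^2 ≤ 1000 / q^4 := by
    rw [div_le_div_iff₀ (by positivity) (by positivity)]
    have h2 : q^2 ≤ 1 := by nlinarith
    nlinarith [mul_nonneg (sq_nonneg q) (sub_nonneg.2 h2), sq_nonneg q]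
  have hDcast : ((n₁+1:ℕ):ℝ) + ((n₂+1:ℕ):ℝ) = (n₁:ℝ) + (n₂:ℝ) + 2 := by
    push_cast; ring
  have hDpos : (0:ℝ) < (n₁:ℝ) + (n₂:ℝ) + 2 := by positivity
  have p1 := VNLO.part1 μ hq0 hq1 n₁ n₂ hT₁ hT₂ hξm hcm hd1' hd2' hξ1 hc1 hind
  constructor
  · refine p1.trans ?_
    rw [hDcast]
    exact div_le_div_of_nonneg_right hq4 hDpos.le
  · intro T Y hTmeas hdT hYmeas hYindep hYlaw hindTY
    set l : Ω → ℝ := fun ω => ((T₂ ω : ℝ) + (c ω : ℝ))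
        / ((T₁ ω : ℝ) + (T₂ ω : ℝ) + (ξ ω : ℝ) + 1) with hl
    have hml : Measurable l :=
      ((measurable_from_nat.comp hT₂).add (measurable_from_nat.comp hcm)).div
        ((((measurable_from_nat.comp hT₁).add (measurable_from_nat.comp hT₂)).add
          (measurable_from_nat.comp hξm)).add measurable_const)
    have hden : ∀ ω, (0:ℝ) < (T₁ ω : ℝ) + (T₂ ω : ℝ) + (ξ ω : ℝ) + 1 := fun ω => by
      positivity
    have hl01 : ∀ ω, l ω ∈ Set.Icc (0:ℝ) 1 := by
      intro ω
      have hcω : (c ω : ℝ) ≤ 1 := by exact_mod_cast hc1 ω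
      have h1 : (0:ℝ) ≤ (T₁ ω : ℝ) := Nat.cast_nonneg _
      have h2 : (0:ℝ) ≤ (ξ ω : ℝ) := Nat.cast_nonneg _
      constructor
      · apply div_nonneg _ (hden ω).le; positivity
      · rw [hl]
        simp only
        rw [div_le_one (hden ω)]
        linarith
    have hdT' : ∀ k, μ {ω | T ω = k} = ENNReal.ofReal (VNLO.w q M k) := fun k => by
      rw [hdT k]; simp [VNLO.w]
    have hmean : ∀ j, ∫ ω, Y j ω ∂μ = ∫ ω, l ω ∂μ := by
      intro j
      have h1 := integral_map (μ := μ) (φ := Y j) (hYmeas j).aemeasurable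
        (f := fun x : ℝ => x) measurable_id.aestronglyMeasurable
      have h2 := integral_map (μ := μ) (φ := l) hml.aemeasurable
        (f := fun x : ℝ => x) measurable_id.aestronglyMeasurable
      rw [← h1, hYlaw j, h2]
    have hsq : ∀ j, ∫ ω, (Y j ω)^2 ∂μ = ∫ ω, (l ω)^2 ∂μ := by
      intro j
      have h1 := integral_map (μ := μ) (φ := Y j) (hYmeas j).aemeasurable
        (f := fun x : ℝ => x^2) (measurable_id.pow_const 2).aestronglyMeasurable
      have h2 := integral_map (μ := μ) (φ := l) hml.aemeasurable
        (f := fun x : ℝ => x^2) (measurable_id.pow_const 2).aestronglyMeasurable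
      rw [← h1, hYlaw j, h2]
    have hYb : ∀ j, ∀ᵐ ω ∂μ, Y j ω ∈ Set.Icc (0:ℝ) 1 := by
      intro j
      rw [ae_iff]
      have e1 : {ω | ¬ Y j ω ∈ Set.Icc (0:ℝ) 1} = (Y j) ⁻¹' (Set.Icc (0:ℝ) 1)ᶜ := rfl
      rw [e1, ← Measure.map_apply (hYmeas j) measurableSet_Icc.compl, hYlaw j,
        Measure.map_apply hml measurableSet_Icc.compl]
      have e2 : l ⁻¹' (Set.Icc (0:ℝ) 1)ᶜ = ∅ := by
        ext ω
        simp only [Set.mem_preimage, Set.mem_compl_iff, Set.mem_empty_iff_false, iff_false,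
          not_not]
        exact hl01 ω
      rw [e2]; exact measure_empty
    have hmem : MemLp l 2 μ := MemLp.of_bound hml.aestronglyMeasurable 1
      (Filter.Eventually.of_forall fun ω => by
        rw [Real.norm_eq_abs, abs_le]
        exact ⟨by linarith [(hl01 ω).1], (hl01 ω).2⟩)
    have hv0 : 0 ≤ (∫ ω, (l ω)^2 ∂μ) - (∫ ω, l ω ∂μ)^2 := by
      have h := variance_eq_sub hmem
      have h0 := variance_nonneg l μ
      rw [h] at h0
      exact h0
    have p2 := VNLO.part2 μ hq0 hq1 hM hTmeas hdT' hYmeas hYindep hYb hmean hsq hindTY hv0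
    refine p2.trans ?_
    -- numeric conclusion
    have hMR : (0:ℝ) < M := by exact_mod_cast hM
    have hp1' : (∫ ω, (l ω)^2 ∂μ) - (∫ ω, l ω ∂μ)^2
        ≤ (108/q^2)/((n₁:ℝ)+(n₂:ℝ)+2) := p1
    have hfac : (0:ℝ) ≤ 2/(q^2*(M:ℝ)) := by positivity
    have c1 : ((∫ ω, (l ω)^2 ∂μ) - (∫ ω, l ω ∂μ)^2) * (2/(q^2*(M:ℝ)))
        ≤ ((108/q^2)/((n₁:ℝ)+(n₂:ℝ)+2)) * (2/(q^2*(M:ℝ))) :=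
      mul_le_mul_of_nonneg_right hp1' hfac
    have c2 : ((108/q^2)/((n₁:ℝ)+(n₂:ℝ)+2)) * (2/(q^2*(M:ℝ)))
        = 216/(q^4*((M:ℝ)*((n₁:ℝ)+(n₂:ℝ)+2))) := by
      rw [div_div, div_mul_div_comm]
      congr 1
      · norm_num
      · ring
    have c3 : (216:ℝ)/(q^4*((M:ℝ)*((n₁:ℝ)+(n₂:ℝ)+2)))
        ≤ 1000/(q^4*((M:ℝ)*((n₁:ℝ)+(n₂:ℝ)+2))) := by
      gcongr
      norm_num
    have c4 : (1000/q^4)/((M:ℝ)*((n₁:ℝ)+(n₂:ℝ)+2))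
        = 1000/(q^4*((M:ℝ)*((n₁:ℝ)+(n₂:ℝ)+2))) := div_div _ _ _
    rw [hDcast, c4]
    linarith [c1, c2.le, c2.ge, c3]
end
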